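/- Let V, W, W', W'' be finite-dimensional F_2-vector spaces with quadratic forms whose polar bilinear forms are nondegenerate. Let α : V → W × W' and α' : V → W × W'' be linear maps preserving the quadratic forms (where W × W' and W × W'' carry the orthogonal sum forms), such that pr_{W'} ∘ α and pr_{W''} ∘ α' are injective and pr_W ∘ α = pr_W ∘ α'. Then there exists a linear equivalence β of W' × W'' preserving the orthogonal sum quadratic form q_{W'} ⊥ q_{W''}, such that for all v in V: (id_W × β)(ι(α(v))) = ι'(α'(v)), where ι : W × W' → W × (W' × W'') is the map (w,w') ↦ (w,(w',0)) and ι' : W × W'' → W × (W' × W'') is the map (w,w'') ↦ (w,(0,w'')). -/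

import Mathlib

open QuadraticMap

lemma z2cases (c : ZMod 2) : c = 0 ∨ c = 1 := by revert c; decide
lemma z2add (c : ZMod 2) : c + c = 0 := by revert c; decide
lemma z2one {c : ZMod 2} (h : c ≠ 0) : c = 1 := by
  rcases z2cases c with h0 | h1
  · exact absurd h0 h
  · exact h1

variable {M : Type} [AddCommGroup M] [Module (ZMod 2) M]

lemma addself (x : M) : x + x = 0 := by
  have h : (2 : ZMod 2) • x = x + x := two_smul _ x
  have h2 : (2 : ZMod 2) = 0 := rfl
  rw [h2, zero_smul] at h; exact h.symm

variable (Q : QuadraticForm (ZMod 2) M)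

lemma Qadd (x y : M) : Q (x + y) = Q x + Q y + polar Q x y := by
  simp only [QuadraticMap.polar]; abel

lemma polar_self_zero (x : M) : polar Q x x = 0 := by
  rw [polar_self, two_smul]; exact z2add _

def tmap (z : M) : M →ₗ[ZMod 2] M := LinearMap.id + (Q.polarBilin.flip z).smulRight z

lemma tmap_apply (z y : M) : tmap Q z y = y + polar Q y z • z := by
  simp [tmap, polarBilin_apply_apply]

lemma tmap_inv (z : M) : Function.Involutive (tmap Q z) := by
  intro y
  rw [tmap_apply, tmap_apply]
  rcases z2cases (polar Q y z) with h | h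
  · simp [h]
  · have h2 : polar Q (y + (1 : ZMod 2) • z) z = 1 := by
      rw [polar_add_left, polar_smul_left, polar_self_zero, h]; simp
    rw [h, h2]
    simp only [one_smul]
    rw [add_assoc, addself, add_zero]

lemma tmap_Q (z : M) (hz : Q z = 1) (y : M) : Q (tmap Q z y) = Q y := by
  rw [tmap_apply]
  rcases z2cases (polar Q y z) with h | h
  · simp [h]
  · rw [h, one_smul, Qadd, hz, h, add_assoc]
    simp [z2add]

lemma tmap_fix (z : M) (x : M) (hx : polar Q x z = 0) : tmap Q z x = x := by
  rw [tmap_apply, hx]; simp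

lemma tmap_move (z : M) (u : M) (hu : polar Q u z = 1) : tmap Q z u = u + z := by
  rw [tmap_apply, hu, one_smul]

def emap (z t : M) : M →ₗ[ZMod 2] M :=
  LinearMap.id + (Q.polarBilin.flip t).smulRight z
    + (Q.polarBilin.flip z).smulRight (t + Q t • z)

lemma emap_apply (z t y : M) :
    emap Q z t y = y + polar Q y t • z + polar Q y z • (t + Q t • z) := by
  simp [emap, polarBilin_apply_apply]

lemma emap_polar_t (z t : M) (hzt : polar Q z t = 0) (y : M) :
    polar Q (emap Q z t y) t = polar Q y t := by
  have htz : polar Q t z = 0 := by rw [polar_comm]; exact hzt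
  rw [emap_apply]
  simp only [polar_add_left, polar_smul_left, hzt, htz, polar_self_zero, smul_eq_mul]
  simp

lemma emap_polar_z (z t : M) (hz : Q z = 0) (hzt : polar Q z t = 0) (y : M) :
    polar Q (emap Q z t y) z = polar Q y z := by
  have htz : polar Q t z = 0 := by rw [polar_comm]; exact hzt
  rw [emap_apply]
  simp only [polar_add_left, polar_smul_left, hzt, htz, polar_self_zero, smul_eq_mul]
  simp

lemma emap_inv (z t : M) (hz : Q z = 0) (hzt : polar Q z t = 0) :
    Function.Involutive (emap Q z t) := by
  intro y
  rw [emap_apply (y := emap Q z t y), emap_polar_t Q z t hzt, emap_polar_z Q z t hz hzt,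
    emap_apply]
  generalize polar Q y t = r
  generalize polar Q y z = s
  have h1 : y + r • z + s • (t + Q t • z) + r • z + s • (t + Q t • z)
      = y + (r • z + r • z) + (s • (t + Q t • z) + s • (t + Q t • z)) := by abel
  rw [h1, addself, addself, add_zero, add_zero]

lemma emap_Q (z t : M) (hz : Q z = 0) (hzt : polar Q z t = 0) (y : M) :
    Q (emap Q z t y) = Q y := by
  have htz : polar Q t z = 0 := by rw [polar_comm]; exact hzt
  rw [emap_apply]
  simp only [Qadd, QuadraticMap.map_smul, polar_add_right, polar_smul_right, polar_add_left,
    polar_smul_left, hz, htz, hzt, polar_self_zero, smul_eq_mul]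
  generalize polar Q y t = r
  generalize polar Q y z = s
  generalize Q y = a
  generalize Q t = b
  revert r s a b; decide

lemma z2one' {c : ZMod 2} (h : c ≠ 0) : c = 1 := by
  revert h; revert c; decide

lemma exists_perp [FiniteDimensional (ZMod 2) M]
    (hQ : ∀ m, (∀ x, polar Q m x = 0) → m = 0)
    (S : Submodule (ZMod 2) M) (u : M) (hu : u ∉ S) :
    ∃ t : M, (∀ s ∈ S, polar Q s t = 0) ∧ polar Q u t = 1 := by
  have hB : LinearMap.BilinForm.Nondegenerate Q.polarBilin := by
    refine ⟨fun m hm => ?_, fun m hm => ?_⟩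
    · exact hQ m fun x => by simpa using hm x
    · exact hQ m fun x => by simpa [polar_comm] using hm x
  have h0 : (Submodule.Quotient.mk u : M ⧸ S) ≠ 0 := by
    simpa [Submodule.Quotient.mk_eq_zero] using hu
  obtain ⟨ψ, hψ⟩ : ∃ ψ : Module.Dual (ZMod 2) (M ⧸ S), ψ (Submodule.Quotient.mk u) ≠ 0 := by
    by_contra h
    push_neg at h
    exact h0 ((Module.forall_dual_apply_eq_zero_iff (ZMod 2) _).mp h)
  set φ : Module.Dual (ZMod 2) M := ψ ∘ₗ S.mkQ with hφ
  set t : M := ((LinearMap.BilinForm.toDual Q.polarBilin hB).symm φ) with ht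
  have key : ∀ y : M, polar Q t y = φ y := by
    intro y
    have := LinearMap.BilinForm.apply_toDual_symm_apply (B := Q.polarBilin) (hB := hB) φ y
    rw [polarBilin_apply_apply] at this
    exact this
  refine ⟨t, ?_, ?_⟩
  · intro s hs
    rw [polar_comm, key]
    simp [hφ, (Submodule.Quotient.mk_eq_zero S).mpr hs]
  · rw [polar_comm, key]
    apply z2one'
    simpa [hφ] using hψ

lemma extend [FiniteDimensional (ZMod 2) M]
    (hQ : ∀ m, (∀ x, polar Q m x = 0) → m = 0) :
    ∀ (n : ℕ) (v w : Fin n → M), LinearIndependent (ZMod 2) v →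
      LinearIndependent (ZMod 2) w →
      (∀ i j, polar Q (v i) (v j) = polar Q (w i) (w j)) →
      (∀ i, Q (v i) = Q (w i)) →
      ∃ F : M ≃ₗ[ZMod 2] M, (∀ y, Q (F y) = Q y) ∧ ∀ i, F (v i) = w i := by
  intro n
  induction n with
  | zero =>
    exact fun v w _ _ _ _ => ⟨LinearEquiv.refl _ _, fun y => rfl, fun i => i.elim0⟩
  | succ n ih =>
    intro v w hv hw hB hQvw
    obtain ⟨F₀, hF₀Q, hF₀⟩ := ih (v ∘ Fin.castSucc) (w ∘ Fin.castSucc)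
      (hv.comp _ (Fin.castSucc_injective n)) (hw.comp _ (Fin.castSucc_injective n))
      (fun i j => hB _ _) (fun i => hQvw _)
    have hF₀B : ∀ x y : M, polar Q (F₀ x) (F₀ y) = polar Q x y := by
      intro x y
      simp only [QuadraticMap.polar, ← map_add, hF₀Q]
    have hlast : (Fin.last n) ∉ Set.range (Fin.castSucc (n := n)) := by
      rintro ⟨j, hj⟩
      exact (Fin.castSucc_lt_last j).ne hj
    set u : M := v (Fin.last n) with hu_def
    set w' : M := F₀.symm (w (Fin.last n)) with hw'_def
    have hF₀w' : F₀ w' = w (Fin.last n) := F₀.apply_symm_apply _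
    set z : M := u + w' with hz_def
    have hQw' : Q w' = Q u := by
      have h1 : Q (F₀ w') = Q w' := hF₀Q w'
      rw [hF₀w'] at h1
      rw [← h1, ← hQvw (Fin.last n)]
    have hpw' : ∀ i : Fin n, polar Q w' (v (Fin.castSucc i)) = polar Q u (v (Fin.castSucc i)) := by
      intro i
      have h1 := hF₀B w' (v (Fin.castSucc i))
      rw [hF₀w'] at h1
      have h2 : F₀ (v (Fin.castSucc i)) = w (Fin.castSucc i) := hF₀ i
      rw [h2] at h1
      rw [← h1, ← hB (Fin.last n) (Fin.castSucc i)]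
    have hzperp : ∀ i : Fin n, polar Q (v (Fin.castSucc i)) z = 0 := by
      intro i
      rw [polar_comm, hz_def, polar_add_left, hpw' i, z2add]
    have hpuw' : polar Q u w' = Q z := by
      rw [hz_def, Qadd, hQw', z2add, zero_add]
    have hpuz : polar Q u z = Q z := by
      rw [hz_def, polar_add_right, polar_self_zero, zero_add, hpuw', ← hz_def]
    have huz : u + z = w' := by
      rw [hz_def, ← add_assoc, addself, zero_add]
    have conclude : ∀ σ : M ≃ₗ[ZMod 2] M, (∀ y, Q (σ y) = Q y) →
        (∀ i : Fin n, σ (v (Fin.castSucc i)) = v (Fin.castSucc i)) → σ u = w' →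
        ∃ F : M ≃ₗ[ZMod 2] M, (∀ y, Q (F y) = Q y) ∧ ∀ i, F (v i) = w i := by
      intro σ hσQ hσfix hσu
      refine ⟨σ.trans F₀, fun y => by simp [LinearEquiv.trans_apply, hF₀Q, hσQ], ?_⟩
      intro i
      induction i using Fin.lastCases with
      | last => rw [LinearEquiv.trans_apply, hσu, hF₀w']
      | cast i =>
        rw [LinearEquiv.trans_apply, hσfix i]
        exact hF₀ i
    rcases eq_or_ne z 0 with h0 | h0
    · have hwu : w' = u := by rw [← huz, h0, add_zero]
      refine conclude (LinearEquiv.refl _ _) (fun y => rfl) (fun i => rfl) ?_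
      simpa using hwu.symm
    · rcases z2cases (Q z) with hQz | hQz
      · -- Eichler case
        set S : Submodule (ZMod 2) M :=
          Submodule.span (ZMod 2) (insert z (Set.range (v ∘ Fin.castSucc))) with hS_def
        have hrange : Set.range (v ∘ Fin.castSucc) = v '' Set.range (Fin.castSucc (n := n)) :=
          Set.range_comp v _
        have huS : u ∉ S := by
          intro hmem
          rw [hS_def, Submodule.mem_span_insert] at hmem
          obtain ⟨a, x, hx, hux⟩ := hmem
          rcases z2cases a with ha | ha
          · rw [ha, zero_smul, zero_add] at hux
            refine hv.notMem_span_image hlast ?_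
            rw [hrange, ← hux] at hx
            exact hx
          · rw [ha, one_smul] at hux
            have hw'x : w' = x := by
              calc w' = u + z := huz.symm
                _ = z + x + z := by rw [hux]
                _ = x := by rw [add_comm z x, add_assoc, addself, add_zero]
            have hx' : w' ∈ Submodule.span (ZMod 2) (Set.range (v ∘ Fin.castSucc)) := by
              rw [hw'x]; exact hx
            have himg : (F₀ : M →ₗ[ZMod 2] M) '' Set.range (v ∘ Fin.castSucc)
                = Set.range (w ∘ Fin.castSucc) := by
              rw [← Set.range_comp]
              exact congrArg Set.range (funext fun i => hF₀ i)
            have hmem2 : w (Fin.last n) ∈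
                Submodule.span (ZMod 2) (w '' Set.range (Fin.castSucc (n := n))) := by
              rw [← Set.range_comp, ← himg, ← Submodule.map_span]
              exact ⟨w', hx', hF₀w'⟩
            exact hw.notMem_span_image hlast hmem2
        obtain ⟨t, htS, hut⟩ := exists_perp Q hQ S u huS
        have hzt : polar Q z t = 0 :=
          htS z (Submodule.subset_span (Set.mem_insert _ _))
        have hvit : ∀ i : Fin n, polar Q (v (Fin.castSucc i)) t = 0 := fun i =>
          htS _ (Submodule.subset_span (Set.mem_insert_iff.mpr (Or.inr ⟨i, rfl⟩)))
        have hpuz0 : polar Q u z = 0 := by rw [hpuz, hQz]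
        refine conclude (LinearEquiv.ofInvolutive (emap Q z t) (emap_inv Q z t hQz hzt))
          (fun y => emap_Q Q z t hQz hzt y) (fun i => ?_) ?_
        · show emap Q z t _ = _
          rw [emap_apply, hvit i, hzperp i, zero_smul, zero_smul, add_zero, add_zero]
        · show emap Q z t u = w'
          rw [emap_apply, hut, hpuz0, zero_smul, add_zero, one_smul, huz]
      · -- transvection case
        have hQz1 : Q z = 1 := hQz
        have hpuz1 : polar Q u z = 1 := by rw [hpuz, hQz1]
        refine conclude (LinearEquiv.ofInvolutive (tmap Q z) (tmap_inv Q z))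
          (fun y => tmap_Q Q z hQz1 y) (fun i => tmap_fix Q z _ (hzperp i)) ?_
        show tmap Q z u = w'
        rw [tmap_move Q z u hpuz1, huz]

/-- Two rank-zero lifts `α : V → W × W'` and `α' : V → W × W''` of the same linear map
`V → W` differ by an isometry of `W' × W''`: there is a linear equivalence `β` of
`W' × W''` preserving the orthogonal sum quadratic form such that
`(id_W × β)(ι(α v)) = ι'(α' v)` for all `v`, where `ι(w, w') = (w, (w', 0))` and
`ι'(w, w'') = (w, (0, w''))`. -/
theorem rank_zero_lifts_equivalent
    (V W W' W'' : Type)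
    [AddCommGroup V] [Module (ZMod 2) V] [FiniteDimensional (ZMod 2) V]
    [AddCommGroup W] [Module (ZMod 2) W] [FiniteDimensional (ZMod 2) W]
    [AddCommGroup W'] [Module (ZMod 2) W'] [FiniteDimensional (ZMod 2) W']
    [AddCommGroup W''] [Module (ZMod 2) W''] [FiniteDimensional (ZMod 2) W'']
    (qV : QuadraticForm (ZMod 2) V) (qW : QuadraticForm (ZMod 2) W)
    (qW' : QuadraticForm (ZMod 2) W') (qW'' : QuadraticForm (ZMod 2) W'')
    (hV : ∀ v : V, (∀ x : V, polar qV v x = 0) → v = 0)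
    (hW : ∀ w : W, (∀ x : W, polar qW w x = 0) → w = 0)
    (hW' : ∀ w : W', (∀ x : W', polar qW' w x = 0) → w = 0)
    (hW'' : ∀ w : W'', (∀ x : W'', polar qW'' w x = 0) → w = 0)
    (α : V →ₗ[ZMod 2] W × W') (α' : V →ₗ[ZMod 2] W × W'')
    (hα : ∀ v : V, qW (α v).1 + qW' (α v).2 = qV v)
    (hα' : ∀ v : V, qW (α' v).1 + qW'' (α' v).2 = qV v)
    (hinj : Function.Injective (fun v : V => (α v).2))
    (hinj' : Function.Injective (fun v : V => (α' v).2))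
    (heq : ∀ v : V, (α v).1 = (α' v).1) :
    ∃ β : (W' × W'') ≃ₗ[ZMod 2] (W' × W''),
      (∀ p : W' × W'', qW' (β p).1 + qW'' (β p).2 = qW' p.1 + qW'' p.2) ∧
      (∀ v : V, ((α v).1, β ((α v).2, (0 : W''))) = ((α' v).1, ((0 : W'), (α' v).2))) := by
  classical
  set Q : QuadraticForm (ZMod 2) (W' × W'') := qW'.prod qW'' with hQ_def
  have hQnd : ∀ m : W' × W'', (∀ x, polar Q m x = 0) → m = 0 := by
    rintro ⟨a, b⟩ h
    have ha : a = 0 := hW' a fun x => by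
      have := h (x, 0)
      simpa [hQ_def] using this
    have hb : b = 0 := hW'' b fun x => by
      have := h (0, x)
      simpa [hQ_def] using this
    simp [ha, hb, Prod.ext_iff]
  set bV := Module.finBasis (ZMod 2) V with hbV
  set n := Module.finrank (ZMod 2) V with hn
  set L : V →ₗ[ZMod 2] W' × W'' :=
    LinearMap.prod ((LinearMap.snd _ _ _).comp α) 0 with hL
  set L' : V →ₗ[ZMod 2] W' × W'' :=
    LinearMap.prod 0 ((LinearMap.snd _ _ _).comp α') with hL'
  have hLapp : ∀ x : V, L x = ((α x).2, (0 : W'')) := fun x => rfl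
  have hL'app : ∀ x : V, L' x = ((0 : W'), (α' x).2) := fun x => rfl
  have hLker : LinearMap.ker L = ⊥ := by
    rw [LinearMap.ker_eq_bot]
    intro x y hxy
    apply hinj
    have := congrArg Prod.fst hxy
    simpa [hLapp] using this
  have hL'ker : LinearMap.ker L' = ⊥ := by
    rw [LinearMap.ker_eq_bot]
    intro x y hxy
    apply hinj'
    have := congrArg Prod.snd hxy
    simpa [hL'app] using this
  have hlinv : LinearIndependent (ZMod 2) (L ∘ bV) := bV.linearIndependent.map' L hLker
  have hlinw : LinearIndependent (ZMod 2) (L' ∘ bV) := bV.linearIndependent.map' L' hL'ker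
  have expand : ∀ a c : V,
      polar qV a c = polar qW (α a).1 (α c).1 + polar qW' (α a).2 (α c).2 := by
    intro a c
    simp only [QuadraticMap.polar, ← hα, map_add, Prod.fst_add, Prod.snd_add]
    abel
  have expand' : ∀ a c : V,
      polar qV a c = polar qW (α' a).1 (α' c).1 + polar qW'' (α' a).2 (α' c).2 := by
    intro a c
    simp only [QuadraticMap.polar, ← hα', map_add, Prod.fst_add, Prod.snd_add]
    abel
  have hpolar : ∀ a c : V,
      polar qW' (α a).2 (α c).2 = polar qW'' (α' a).2 (α' c).2 := by
    intro a c
    have e1 := expand a c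
    have e2 := expand' a c
    rw [← heq a, ← heq c] at e2
    exact add_left_cancel (e1.symm.trans e2)
  have hQval : ∀ a : V, qW' (α a).2 = qW'' (α' a).2 := by
    intro a
    have e1 := hα a
    have e2 := hα' a
    rw [← heq a] at e2
    exact add_left_cancel (e1.trans e2.symm)
  have hBvw : ∀ i j : Fin n, polar Q ((L ∘ bV) i) ((L ∘ bV) j)
      = polar Q ((L' ∘ bV) i) ((L' ∘ bV) j) := by
    intro i j
    simp only [Function.comp_apply, hLapp, hL'app, hQ_def, polar_prod]
    simpa using hpolar (bV i) (bV j)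
  have hQvw : ∀ i : Fin n, Q ((L ∘ bV) i) = Q ((L' ∘ bV) i) := by
    intro i
    simp only [Function.comp_apply, hLapp, hL'app, hQ_def, QuadraticMap.prod_apply]
    simpa using hQval (bV i)
  obtain ⟨F, hFQ, hFi⟩ := extend Q hQnd n (L ∘ bV) (L' ∘ bV) hlinv hlinw hBvw hQvw
  have hFL : ∀ x : V, F (L x) = L' x := by
    have : (F : (W' × W'') →ₗ[ZMod 2] W' × W'').comp L = L' := by
      apply bV.ext
      intro i
      exact hFi i
    intro x
    exact LinearMap.congr_fun this x
  refine ⟨F, ?_, ?_⟩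
  · intro p
    have := hFQ p
    simpa [hQ_def, QuadraticMap.prod_apply] using this
  · intro x
    refine Prod.ext (heq x) ?_
    have := hFL x
    rw [hLapp, hL'app] at this
    exact this
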